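/- Let H be an RKHS with kernel κ on D ⊆ ℝᵈ such that every unit-norm element of H is C² with Hessian operator norm bounded by Q. Suppose points x₁,…,x_T form a δ-cover of D in the sense that every x ∈ D lies in the convex hull of a subset of the sample points of diameter at most δ. Then the posterior predictive standard deviation satisfies sup_{x ∈ D} σ_T(x) ≤ Q δ² / 4, where σ_T(x)² = κ(x,x) − k(x)ᵀ K⁻¹ k(x). -/

import Mathlib

/-!
`σ_T(x)` is the distance from `κ(x, ·)` to the span of the `κ(xᵢ, ·)`, so it is at most
`‖κ(x, ·) - ∑ wᵢ κ(zᵢ, ·)‖` whenever `x = ∑ wᵢ zᵢ` is a convex combination of sample points.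
Testing this vector against a unit `h` gives `h(x) - ∑ wᵢ h(zᵢ)`; averaging the second-order
Taylor expansions of `h` at `x` cancels the linear terms and bounds it by `Q/2 · ∑ wᵢ ‖zᵢ - x‖²`,
and the weighted variance of points of diameter `δ` is at most `δ²/2`, being half the weighted
mean of the squared pairwise distances.
-/

open RealInnerProductSpace Finset

section Taylor

variable {E F : Type*} [NormedAddCommGroup E] [NormedSpace ℝ E]
  [NormedAddCommGroup F] [NormedSpace ℝ F]

lemma norm_fderiv_sub_fderiv_le_of_norm_iteratedFDeriv_two_le {f : E → F} {Q : ℝ}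
    (hf : ContDiff ℝ 2 f) (hQ : ∀ y, ‖iteratedFDeriv ℝ 2 f y‖ ≤ Q) (a b : E) :
    ‖fderiv ℝ f a - fderiv ℝ f b‖ ≤ Q * ‖a - b‖ := by
  have hdf : Differentiable ℝ (fderiv ℝ f) :=
    (hf.fderiv_right (m := 1) le_rfl).differentiable one_ne_zero
  refine Convex.norm_image_sub_le_of_norm_fderiv_le (fun z _ => hdf z) (fun z _ => ?_)
    convex_univ trivial trivial
  rw [← norm_iteratedFDeriv_one, norm_iteratedFDeriv_fderiv]
  exact hQ z

/-- Along the segment `t ↦ x + t (y - x)` the remainder has derivative of norm at most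
`Q t ‖y - x‖²`, the derivative of `Q t² ‖y - x‖² / 2`. -/
lemma norm_image_sub_sub_fderiv_le {f : E → F} {Q : ℝ} {x : E} (hf : Differentiable ℝ f)
    (hlip : ∀ z, ‖fderiv ℝ f z - fderiv ℝ f x‖ ≤ Q * ‖z - x‖) (y : E) :
    ‖f y - f x - fderiv ℝ f x (y - x)‖ ≤ Q / 2 * ‖y - x‖ ^ 2 := by
  set γ : ℝ → E := fun t => x + t • (y - x)
  set g : ℝ → F := fun t => f (γ t) - f x - t • fderiv ℝ f x (y - x)
  have hg : ∀ t, HasDerivAt g (fderiv ℝ f (γ t) (y - x) - fderiv ℝ f x (y - x)) t := by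
    intro t
    have hγ : HasDerivAt γ (y - x) t := by
      simpa [γ] using ((hasDerivAt_id t).smul_const (y - x)).const_add x
    exact (((hf (γ t)).hasFDerivAt.comp_hasDerivAt t hγ).sub_const (f x)).sub
      (by simpa using (hasDerivAt_id t).smul_const (fderiv ℝ f x (y - x)))
  have hB : ∀ t, HasDerivAt (fun t => Q / 2 * ‖y - x‖ ^ 2 * t ^ 2)
      (Q / 2 * ‖y - x‖ ^ 2 * (2 * t)) t := fun t => by
    simpa using (hasDerivAt_pow 2 t).const_mul (Q / 2 * ‖y - x‖ ^ 2)
  have hbound : ∀ t ∈ Set.Ico (0 : ℝ) 1,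
      ‖fderiv ℝ f (γ t) (y - x) - fderiv ℝ f x (y - x)‖ ≤ Q / 2 * ‖y - x‖ ^ 2 * (2 * t) := by
    intro t ht
    have hγx : γ t - x = t • (y - x) := by simp [γ]
    calc ‖fderiv ℝ f (γ t) (y - x) - fderiv ℝ f x (y - x)‖
        ≤ ‖fderiv ℝ f (γ t) - fderiv ℝ f x‖ * ‖y - x‖ :=
          (fderiv ℝ f (γ t) - fderiv ℝ f x).le_opNorm (y - x)
      _ ≤ Q * (t * ‖y - x‖) * ‖y - x‖ := by
          gcongr
          simpa [hγx, norm_smul, abs_of_nonneg ht.1] using hlip (γ t)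
      _ = Q / 2 * ‖y - x‖ ^ 2 * (2 * t) := by ring
  have key := image_norm_le_of_norm_deriv_right_le_deriv_boundary
    (fun t _ => (hg t).continuousAt.continuousWithinAt) (fun t _ => (hg t).hasDerivWithinAt)
    (by simp [g, γ]) hB hbound (Set.right_mem_Icc.mpr zero_le_one)
  simpa [g, γ] using key

end Taylor

section WeightedMean

variable {ι : Type*} [Fintype ι] {w : ι → ℝ}

lemma norm_sub_sum_smul_le_sum_mul_norm_sub_sq {E F : Type*} [NormedAddCommGroup E]
    [NormedSpace ℝ E] [NormedAddCommGroup F] [NormedSpace ℝ F] {f : E → F} {Q : ℝ}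
    {p : ι → E} {x : E} (hf : Differentiable ℝ f)
    (hlip : ∀ z, ‖fderiv ℝ f z - fderiv ℝ f x‖ ≤ Q * ‖z - x‖)
    (hw0 : ∀ i, 0 ≤ w i) (hw1 : ∑ i, w i = 1) (hx : ∑ i, w i • p i = x) :
    ‖f x - ∑ i, w i • f (p i)‖ ≤ Q / 2 * ∑ i, w i * ‖p i - x‖ ^ 2 := by
  have hlin : ∑ i, w i • fderiv ℝ f x (p i - x) = 0 := by
    simp_rw [← map_smul, ← map_sum, smul_sub, sum_sub_distrib, hx, ← sum_smul, hw1, one_smul,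
      sub_self, map_zero]
  have hsplit : f x - ∑ i, w i • f (p i)
      = -∑ i, w i • (f (p i) - f x - fderiv ℝ f x (p i - x)) := by
    simp_rw [smul_sub, sum_sub_distrib, hlin, ← sum_smul, hw1, one_smul]
    abel
  rw [hsplit, norm_neg, mul_sum]
  refine (norm_sum_le _ _).trans (sum_le_sum fun i _ => ?_)
  rw [norm_smul, Real.norm_of_nonneg (hw0 i), mul_left_comm]
  exact mul_le_mul_of_nonneg_left (norm_image_sub_sub_fderiv_le hf hlip (p i)) (hw0 i)

lemma sum_sum_mul_norm_sub_sq_eq {E : Type*} [NormedAddCommGroup E] [InnerProductSpace ℝ E]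
    {p : ι → E} {x : E} (hw1 : ∑ i, w i = 1) (hx : ∑ i, w i • p i = x) :
    ∑ i, ∑ j, w i * w j * ‖p i - p j‖ ^ 2 = 2 * ∑ i, w i * ‖p i - x‖ ^ 2 := by
  have hcentered : ∑ i, w i • (p i - x) = 0 := by
    simp [smul_sub, sum_sub_distrib, hx, ← sum_smul, hw1]
  have hexpand : ∀ i j, w i * w j * ‖p i - p j‖ ^ 2 = w j * (w i * ‖p i - x‖ ^ 2)
      + w i * (w j * ‖p j - x‖ ^ 2) - 2 * ⟪w i • (p i - x), w j • (p j - x)⟫ := by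
    intro i j
    rw [show p i - p j = (p i - x) - (p j - x) by abel, norm_sub_sq_real,
      real_inner_smul_left, real_inner_smul_right]
    ring
  have hcross : ∑ i, ∑ j, ⟪w i • (p i - x), w j • (p j - x)⟫ = 0 := by
    have h := inner_zero_left (𝕜 := ℝ) (∑ j, w j • (p j - x))
    rwa [← hcentered, sum_inner, sum_congr rfl fun i _ => inner_sum _ _ _] at h
  simp only [hexpand, sum_sub_distrib, sum_add_distrib, ← sum_mul, ← mul_sum, hw1, one_mul,
    hcross]
  ring

lemma sum_mul_norm_sub_sq_le_of_dist_le {E : Type*} [NormedAddCommGroup E]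
    [InnerProductSpace ℝ E] {p : ι → E} {x : E} {δ : ℝ} (hw0 : ∀ i, 0 ≤ w i)
    (hw1 : ∑ i, w i = 1) (hx : ∑ i, w i • p i = x) (hδ : ∀ i j, dist (p i) (p j) ≤ δ) :
    ∑ i, w i * ‖p i - x‖ ^ 2 ≤ δ ^ 2 / 2 := by
  have hpairs : ∑ i, ∑ j, w i * w j * ‖p i - p j‖ ^ 2 ≤ ∑ i, ∑ j, w i * w j * δ ^ 2 := by
    gcongr with i _ j _
    · exact mul_nonneg (hw0 i) (hw0 j)
    · rw [← dist_eq_norm]; exact hδ i j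
  simp_rw [sum_sum_mul_norm_sub_sq_eq hw1 hx, mul_assoc, ← mul_sum, ← sum_mul, hw1] at hpairs
  linarith

lemma norm_sub_sum_smul_le_of_dist_le {E F : Type*} [NormedAddCommGroup E]
    [InnerProductSpace ℝ E] [NormedAddCommGroup F] [NormedSpace ℝ F] {f : E → F} {Q δ : ℝ}
    {p : ι → E} {x : E}
    (hf : ContDiff ℝ 2 f) (hQ : ∀ y, ‖iteratedFDeriv ℝ 2 f y‖ ≤ Q)
    (hw0 : ∀ i, 0 ≤ w i) (hw1 : ∑ i, w i = 1) (hx : ∑ i, w i • p i = x)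
    (hδ : ∀ i j, dist (p i) (p j) ≤ δ) :
    ‖f x - ∑ i, w i • f (p i)‖ ≤ Q * δ ^ 2 / 4 := by
  have hQ0 : 0 ≤ Q := (norm_nonneg _).trans (hQ x)
  calc ‖f x - ∑ i, w i • f (p i)‖ ≤ Q / 2 * ∑ i, w i * ‖p i - x‖ ^ 2 :=
        norm_sub_sum_smul_le_sum_mul_norm_sub_sq (hf.differentiable two_ne_zero)
          (fun z => norm_fderiv_sub_fderiv_le_of_norm_iteratedFDeriv_two_le hf hQ z x) hw0 hw1 hx
    _ ≤ Q / 2 * (δ ^ 2 / 2) := by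
        gcongr; exact sum_mul_norm_sub_sq_le_of_dist_le hw0 hw1 hx hδ
    _ = Q * δ ^ 2 / 4 := by ring

end WeightedMean

section Gram

variable {ι H : Type*} [Fintype ι] [DecidableEq ι] [NormedAddCommGroup H]
  [InnerProductSpace ℝ H] {e : ι → H} {G : Matrix ι ι ℝ}

/-- When `G` is the Gram matrix of the `e i`, this is `y` minus its orthogonal projection onto
their span, i.e. `(I - P) y`. -/
noncomputable def gramResidual (e : ι → H) (G : Matrix ι ι ℝ) (y : H) : H :=
  y - ∑ i, (G⁻¹.mulVec fun j => ⟪y, e j⟫) i • e i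

lemma inner_gramResidual_eq_zero (hG : ∀ i j, G i j = ⟪e i, e j⟫) (hdet : IsUnit G.det)
    (y : H) (j : ι) : ⟪e j, gramResidual e G y⟫ = 0 := by
  set α := G⁻¹.mulVec fun j => ⟪y, e j⟫
  have hsolve : G.mulVec α = fun j => ⟪y, e j⟫ := by
    rw [Matrix.mulVec_mulVec, Matrix.mul_nonsing_inv _ hdet, Matrix.one_mulVec]
  have hj : ∑ i, α i * ⟪e j, e i⟫ = ⟪e j, y⟫ := by
    rw [real_inner_comm, ← congrFun hsolve j]
    simp only [Matrix.mulVec, dotProduct, hG, mul_comm]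
  rw [gramResidual, inner_sub_right, inner_sum]
  simp only [real_inner_smul_right]
  exact sub_eq_zero_of_eq hj.symm

lemma inner_gramResidual_eq_zero_of_mem_span (hG : ∀ i j, G i j = ⟪e i, e j⟫)
    (hdet : IsUnit G.det) (y : H) {v : H} (hv : v ∈ Submodule.span ℝ (Set.range e)) :
    ⟪v, gramResidual e G y⟫ = 0 := by
  have hspan : Submodule.span ℝ (Set.range e) ≤ (ℝ ∙ gramResidual e G y)ᗮ := by
    rw [Submodule.span_le]
    rintro _ ⟨j, rfl⟩
    exact Submodule.mem_orthogonal_singleton_iff_inner_left.mpr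
      (inner_gramResidual_eq_zero hG hdet y j)
  exact Submodule.mem_orthogonal_singleton_iff_inner_left.mp (hspan hv)

lemma sub_gramResidual_mem_span (y : H) :
    y - gramResidual e G y ∈ Submodule.span ℝ (Set.range e) := by
  rw [gramResidual, sub_sub_cancel]
  exact Submodule.sum_mem _ fun i _ => Submodule.smul_mem _ _ (Submodule.subset_span ⟨i, rfl⟩)

lemma inner_self_sub_dotProduct_eq_norm_gramResidual_sq (hG : ∀ i j, G i j = ⟪e i, e j⟫)
    (hdet : IsUnit G.det) (y : H) :
    ⟪y, y⟫ - dotProduct (fun j => ⟪y, e j⟫) (G⁻¹.mulVec fun j => ⟪y, e j⟫)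
      = ‖gramResidual e G y‖ ^ 2 := by
  have hperp :=
    inner_gramResidual_eq_zero_of_mem_span hG hdet y (sub_gramResidual_mem_span (G := G) y)
  rw [inner_sub_left, sub_eq_zero] at hperp
  rw [← real_inner_self_eq_norm_sq, ← hperp]
  simp only [gramResidual, inner_sub_right, inner_sum, real_inner_smul_right, dotProduct,
    mul_comm]

lemma norm_gramResidual_le (hG : ∀ i j, G i j = ⟪e i, e j⟫) (hdet : IsUnit G.det) (y : H)
    {v : H} (hv : v ∈ Submodule.span ℝ (Set.range e)) : ‖gramResidual e G y‖ ≤ ‖y - v‖ := by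
  have hmem : y - gramResidual e G y - v ∈ Submodule.span ℝ (Set.range e) :=
    Submodule.sub_mem _ (sub_gramResidual_mem_span (G := G) y) hv
  have horth : ⟪gramResidual e G y, y - gramResidual e G y - v⟫ = 0 := by
    rw [real_inner_comm]; exact inner_gramResidual_eq_zero_of_mem_span hG hdet y hmem
  have hpyth := norm_add_sq_eq_norm_sq_add_norm_sq_real horth
  rw [show gramResidual e G y + (y - gramResidual e G y - v) = y - v by abel] at hpyth
  rw [mul_self_le_mul_self_iff (norm_nonneg _) (norm_nonneg _), hpyth]
  exact le_add_of_nonneg_right (mul_self_nonneg _)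

lemma nontrivial_of_isUnit_det_gram [Nonempty ι] (hG : ∀ i j, G i j = ⟪e i, e j⟫)
    (hdet : IsUnit G.det) : Nontrivial H := by
  by_contra hH
  rw [not_nontrivial_iff_subsingleton] at hH
  have hzero : G = 0 := by
    ext i j
    rw [hG, Subsingleton.elim (e i) 0, inner_zero_left, Matrix.zero_apply]
  rw [hzero, Matrix.det_zero] at hdet
  exact not_isUnit_zero hdet

end Gram

lemma norm_le_of_forall_inner_le {H : Type*} [NormedAddCommGroup H] [InnerProductSpace ℝ H]
    [Nontrivial H] {y : H} {C : ℝ} (hC : ∀ h : H, ‖h‖ = 1 → ⟪h, y⟫ ≤ C) : ‖y‖ ≤ C := by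
  rcases eq_or_ne y 0 with rfl | hy
  · obtain ⟨h, hh⟩ := exists_norm_eq H zero_le_one
    simpa using hC h hh
  · have hunit := hC (‖y‖⁻¹ • y) (norm_smul_inv_norm hy)
    rwa [real_inner_smul_left, real_inner_self_eq_norm_sq, pow_two,
      inv_mul_cancel_left₀ (norm_ne_zero_iff.mpr hy)] at hunit

theorem posterior_std_dev_bound_general
    {H : Type*} [NormedAddCommGroup H] [InnerProductSpace ℝ H]
    {d T : ℕ} (k : EuclideanSpace ℝ (Fin d) → H)
    (D : Set (EuclideanSpace ℝ (Fin d)))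
    (Q δ : ℝ)
    (hsmooth : ∀ h : H, ‖h‖ = 1 →
      ContDiff ℝ 2 (fun z => ⟪h, k z⟫) ∧
        ∀ y, ‖iteratedFDeriv ℝ 2 (fun z => ⟪h, k z⟫) y‖ ≤ Q)
    (xs : Fin T → EuclideanSpace ℝ (Fin d))
    (hcover : ∀ x ∈ D, ∃ s : Set (EuclideanSpace ℝ (Fin d)),
      s ⊆ Set.range xs ∧ (∀ y ∈ s, ∀ z ∈ s, dist y z ≤ δ) ∧ x ∈ convexHull ℝ s)
    (Gram : Matrix (Fin T) (Fin T) ℝ)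
    (hGram : ∀ i j, Gram i j = ⟪k (xs i), k (xs j)⟫)
    (hInv : IsUnit Gram.det) :
    ∀ x ∈ D,
      Real.sqrt (⟪k x, k x⟫ -
          dotProduct (fun i => ⟪k x, k (xs i)⟫)
            (Gram⁻¹.mulVec fun i => ⟪k x, k (xs i)⟫)) ≤ Q * δ ^ 2 / 4 := by
  intro x hx
  obtain ⟨s, hs, hsδ, hxs⟩ := hcover x hx
  obtain ⟨ι, _, w, z, hw0, hw1, hzs, hzx⟩ := mem_convexHull_iff_exists_fintype.mp hxs
  obtain ⟨j₀, -⟩ := hs (convexHull_nonempty_iff.mp ⟨x, hxs⟩).some_mem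
  have : Nonempty (Fin T) := ⟨j₀⟩
  have : Nontrivial H := nontrivial_of_isUnit_det_gram (e := fun i => k (xs i)) hGram hInv
  have hv : ∑ i, w i • k (z i) ∈ Submodule.span ℝ (Set.range fun i => k (xs i)) := by
    refine Submodule.sum_mem _ fun i _ => Submodule.smul_mem _ _ (Submodule.subset_span ?_)
    obtain ⟨j, hj⟩ := hs (hzs i)
    exact ⟨j, congrArg k hj⟩
  rw [inner_self_sub_dotProduct_eq_norm_gramResidual_sq hGram hInv, Real.sqrt_sq (norm_nonneg _)]
  refine (norm_gramResidual_le hGram hInv _ hv).trans (norm_le_of_forall_inner_le fun h hh => ?_)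
  obtain ⟨hfC, hfQ⟩ := hsmooth h hh
  calc ⟪h, k x - ∑ i, w i • k (z i)⟫ = ⟪h, k x⟫ - ∑ i, w i • ⟪h, k (z i)⟫ := by
        simp only [inner_sub_right, inner_sum, real_inner_smul_right, smul_eq_mul]
    _ ≤ ‖⟪h, k x⟫ - ∑ i, w i • ⟪h, k (z i)⟫‖ := Real.le_norm_self _
    _ ≤ Q * δ ^ 2 / 4 :=
        norm_sub_sum_smul_le_of_dist_le (f := fun y => ⟪h, k y⟫) hfC hfQ hw0 hw1 hzx
          fun i j => hsδ _ (hzs i) _ (hzs j)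

/-- Variance bound: in an RKHS on `D ⊆ ℝᵈ` with feature map `k` (kernel
`κ(x,y) = ⟪k x, k y⟫`, evaluations `h(x) = ⟪h, k x⟫`) such that every unit-norm element
of the RKHS is `C²` with Hessian operator norm bounded by `Q`, if the sample points
`x₁,…,x_T` form a `δ`-cover of `D` (every `x ∈ D` lies in the convex hull of a subset of
the sample points of diameter at most `δ`) and the Gram matrix `K` is invertible, then
the posterior predictive standard deviation
`σ_T(x) = √(κ(x,x) − k(x)ᵀ K⁻¹ k(x))` satisfies `σ_T(x) ≤ Q δ²/4` for all `x ∈ D`. -/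
theorem posterior_std_dev_bound
    {H : Type*} [NormedAddCommGroup H] [InnerProductSpace ℝ H] [CompleteSpace H]
    {d T : ℕ} (k : EuclideanSpace ℝ (Fin d) → H)
    (D : Set (EuclideanSpace ℝ (Fin d)))
    (Q δ : ℝ)
    (hsmooth : ∀ h : H, ‖h‖ = 1 →
      ContDiff ℝ 2 (fun z => ⟪h, k z⟫) ∧
        ∀ y, ‖iteratedFDeriv ℝ 2 (fun z => ⟪h, k z⟫) y‖ ≤ Q)
    (xs : Fin T → EuclideanSpace ℝ (Fin d))
    (hcover : ∀ x ∈ D, ∃ s : Set (EuclideanSpace ℝ (Fin d)),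
      s ⊆ Set.range xs ∧ (∀ y ∈ s, ∀ z ∈ s, dist y z ≤ δ) ∧ x ∈ convexHull ℝ s)
    (Gram : Matrix (Fin T) (Fin T) ℝ)
    (hGram : ∀ i j, Gram i j = ⟪k (xs i), k (xs j)⟫)
    (hInv : IsUnit Gram.det) :
    ∀ x ∈ D,
      Real.sqrt (⟪k x, k x⟫ -
          dotProduct (fun i => ⟪k x, k (xs i)⟫)
            (Gram⁻¹.mulVec fun i => ⟪k x, k (xs i)⟫)) ≤ Q * δ ^ 2 / 4 :=
  posterior_std_dev_bound_general k D Q δ hsmooth xs hcover Gram hGram hInv
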